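/- Fix ζ > 0 and let Q(p) = 12p⁹ − 31p⁸ + 20p⁷. Let P : [0,ζ] → ℝ be continuous with P(ζ − z) = P(z) for all z ∈ [0,ζ], and define β(z) = (1/sinh ζ)·∫₀^z sinh(u)·Q(P(u)) du. Then for every z ∈ [0,ζ], ∫₀^ζ [sinh(min(z,u))·sinh(ζ − max(z,u))/sinh(ζ)]·Q(P(u)) du = sinh(ζ − z)·β(z) + sinh(z)·β(ζ − z). -/

import Mathlib

open Real

/-- Stationary no-branching absorption probability of the simplest model. -/
noncomputable def rhoAbs (ζ z : ℝ) : ℝ := Real.cosh (ζ/2 - z) / Real.cosh (ζ/2)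

/-- Stationary first-branching kernel of the simplest model. -/
noncomputable def Gker (ζ z u : ℝ) : ℝ :=
  Real.sinh (min z u) * Real.sinh (ζ - max z u) / Real.sinh ζ

/-- The combinatorial polynomial Q₍₂,₃₎ counting strongly defective configurations. -/
def Qpoly (p : ℝ) : ℝ := 12*p^9 - 31*p^8 + 20*p^7

/-- The renormalization (recoding) operator of the simplest model. -/
noncomputable def Fop (ζ : ℝ) (φ : ℝ → ℝ) (z : ℝ) : ℝ :=
  rhoAbs ζ z + (1 - rhoAbs ζ z) * ∫ u in (0:ℝ)..ζ, Gker ζ z u * Qpoly (φ u)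

/-! On `u ≤ z` the kernel is `sinh (ζ - z) sinh u / sinh ζ` and on `z ≤ u` it is
`sinh z sinh (ζ - u) / sinh ζ`, so the integral splits at `z` into the two pieces of the symmetric
form; the reflection `u ↦ ζ - u`, under which `P` is invariant, turns the second piece into
`∫₀^{ζ-z} sinh u · Q(P u) du`. -/

open intervalIntegral Set

lemma Gker_of_le {ζ z u : ℝ} (h : u ≤ z) : Gker ζ z u = sinh (ζ - z) / sinh ζ * sinh u := by
  rw [Gker, min_eq_right h, max_eq_left h]
  ring

lemma Gker_of_ge {ζ z u : ℝ} (h : z ≤ u) : Gker ζ z u = sinh z / sinh ζ * sinh (ζ - u) := by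
  rw [Gker, min_eq_left h, max_eq_right h]
  ring

lemma continuous_Gker (ζ z : ℝ) : Continuous (Gker ζ z) := by
  unfold Gker
  fun_prop

lemma continuous_Qpoly : Continuous Qpoly := by
  unfold Qpoly
  fun_prop

lemma integral_Gker_mul {ζ z : ℝ} {g : ℝ → ℝ} (hz : z ∈ Icc 0 ζ)
    (hg : IntervalIntegrable g MeasureTheory.volume 0 ζ) :
    ∫ u in 0..ζ, Gker ζ z u * g u
      = sinh (ζ - z) / sinh ζ * (∫ u in 0..z, sinh u * g u)
        + sinh z / sinh ζ * ∫ u in z..ζ, sinh (ζ - u) * g u := by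
  have hGg : IntervalIntegrable (fun u => Gker ζ z u * g u) MeasureTheory.volume 0 ζ :=
    hg.continuousOn_mul (continuous_Gker ζ z).continuousOn
  have hsub : uIcc 0 z ⊆ uIcc 0 ζ ∧ uIcc z ζ ⊆ uIcc 0 ζ :=
    ⟨uIcc_subset_uIcc left_mem_uIcc (by simpa [uIcc_of_le (hz.1.trans hz.2)] using hz),
      uIcc_subset_uIcc (by simpa [uIcc_of_le (hz.1.trans hz.2)] using hz) right_mem_uIcc⟩
  rw [← integral_add_adjacent_intervals (hGg.mono_set hsub.1) (hGg.mono_set hsub.2)]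
  congr 1
  · rw [← integral_const_mul]
    refine integral_congr fun u hu => ?_
    rw [uIcc_of_le hz.1] at hu
    rw [Gker_of_le hu.2, mul_assoc]
  · rw [← integral_const_mul]
    refine integral_congr fun u hu => ?_
    rw [uIcc_of_le hz.2] at hu
    rw [Gker_of_ge hu.1, mul_assoc]

lemma integral_sinh_sub_mul_of_symm {ζ z : ℝ} {g : ℝ → ℝ} (hz : z ∈ Icc 0 ζ)
    (hsym : ∀ u ∈ Icc 0 ζ, g (ζ - u) = g u) :
    ∫ u in z..ζ, sinh (ζ - u) * g u = ∫ u in 0..ζ - z, sinh u * g u := by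
  have hreflect := integral_comp_sub_left (fun v => sinh v * g (ζ - v)) ζ (a := z) (b := ζ)
  simp only [sub_sub_cancel, sub_self] at hreflect
  rw [hreflect]
  refine integral_congr fun v hv => ?_
  rw [uIcc_of_le (sub_nonneg.2 hz.2)] at hv
  simp only [hsym v ⟨hv.1, hv.2.trans (sub_le_self _ hz.1)⟩]

theorem integral_reduction_symmetric_form_general (ζ : ℝ) (P : ℝ → ℝ)
    (hP : Continuous P) (hsym : ∀ z ∈ Set.Icc (0:ℝ) ζ, P (ζ - z) = P z) :
    ∀ z ∈ Set.Icc (0:ℝ) ζ,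
      (∫ u in (0:ℝ)..ζ, Gker ζ z u * Qpoly (P u))
        = Real.sinh (ζ - z) * ((1 / Real.sinh ζ) * ∫ u in (0:ℝ)..z, Real.sinh u * Qpoly (P u))
          + Real.sinh z * ((1 / Real.sinh ζ) * ∫ u in (0:ℝ)..(ζ - z), Real.sinh u * Qpoly (P u)) := by
  intro z hz
  rw [integral_Gker_mul (g := fun u => Qpoly (P u)) hz
      ((continuous_Qpoly.comp hP).intervalIntegrable 0 ζ),
    integral_sinh_sub_mul_of_symm (g := fun u => Qpoly (P u)) hz fun u hu => by rw [hsym u hu]]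
  ring

/-- Reduction of the fixed point integral to the symmetric form via
β(z) = (1/sinh ζ)·∫₀^z sinh(u)·Q(P(u)) du:
∫₀^ζ G(z,u)·Q(P(u)) du = sinh(ζ − z)·β(z) + sinh(z)·β(ζ − z) for symmetric P. -/
theorem integral_reduction_symmetric_form (ζ : ℝ) (hζ : 0 < ζ) (P : ℝ → ℝ)
    (hP : Continuous P) (hsym : ∀ z ∈ Set.Icc (0:ℝ) ζ, P (ζ - z) = P z) :
    ∀ z ∈ Set.Icc (0:ℝ) ζ,
      (∫ u in (0:ℝ)..ζ, Gker ζ z u * Qpoly (P u))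
        = Real.sinh (ζ - z) * ((1 / Real.sinh ζ) * ∫ u in (0:ℝ)..z, Real.sinh u * Qpoly (P u))
          + Real.sinh z * ((1 / Real.sinh ζ) * ∫ u in (0:ℝ)..(ζ - z), Real.sinh u * Qpoly (P u)) :=
  integral_reduction_symmetric_form_general ζ P hP hsym
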